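/- arXiv:2409.17764 — 3 statements merged into one kernel-verified Lean document; each statement's English description precedes it below -/
import Mathlib

section
/- Let u ≥ 2 and let F be a fixed nice u-graph with r = v(F) ≥ 4 vertices. Let π = π(n) ∈ [0,1] be any sequence such that for every ε > 0 one has π(n) ≤ n^{1−r+ε} for all sufficiently large n. Then with probability tending to 1 as n → ∞, the random F-graph H = H_F(n,π) satisfies both: (i) no vertex of H has degree more than d̄(π) + max(d̄(π), 3 log n), where d̄(π) = (r/n)·M·π is the expected degree of a fixed vertex; and (ii) the r-uniform multihypergraph of vertex sets of the F-edges of H contains no avoidable configuration. -/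
open Classical Filter Asymptotics MeasureTheory
open scoped ENNReal

noncomputable section

/-- The type of potential `F`-edges on vertex set `Fin n`: a pair consisting of the
`r`-element vertex set of the copy and the `u`-edge set of the copy. -/
abbrev FE (n : ℕ) := Finset (Fin n) × Finset (Finset (Fin n))

/-- `F` (a `u`-graph on `Fin r`) is strictly 1-balanced: every proper subgraph `(V', E')`
with more than one vertex has strictly smaller 1-density, i.e.
`e'/(v'-1) < e(F)/(r-1)`, written multiplicatively. -/
def StrictlyOneBalanced {r : ℕ} (F : Finset (Finset (Fin r))) : Prop :=
  ∀ (V' : Finset (Fin r)) (E' : Finset (Finset (Fin r))),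
    E' ⊆ F → (∀ e ∈ E', e ⊆ V') → 1 < V'.card → ¬(V' = Finset.univ ∧ E' = F) →
      E'.card * (r - 1) < F.card * (V'.card - 1)

/-- After deleting the vertices in `S`, the hypergraph `F` is connected. -/
def ConnectedAvoiding {r : ℕ} (F : Finset (Finset (Fin r))) (S : Finset (Fin r)) : Prop :=
  ∀ x y : Fin r, x ∉ S → y ∉ S →
    Relation.ReflTransGen (fun a b => ∃ e ∈ F, Disjoint e S ∧ a ∈ e ∧ b ∈ e) x y

/-- `F` is 3-connected: at least 4 vertices, and no set of at most 2 vertices disconnects it. -/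
def ThreeConnected {r : ℕ} (F : Finset (Finset (Fin r))) : Prop :=
  4 ≤ r ∧ ∀ S : Finset (Fin r), S.card ≤ 2 → ConnectedAvoiding F S

/-- Two edge sets on `Fin r` are isomorphic via a permutation of the vertices. -/
def EdgeIso {r : ℕ} (F F' : Finset (Finset (Fin r))) : Prop :=
  ∃ σ : Equiv.Perm (Fin r), F.image (fun e => e.image (fun x => σ x)) = F'

/-- `F` is nice: strictly 1-balanced, 3-connected and either `u ≥ 3` or `u = 2` and `F`
cannot be transformed into an isomorphic graph by adding one edge and deleting one edge. -/
def Nice {r : ℕ} (u : ℕ) (F : Finset (Finset (Fin r))) : Prop :=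
  StrictlyOneBalanced F ∧ ThreeConnected F ∧
    (3 ≤ u ∨ (u = 2 ∧ ¬ ∃ a b : Finset (Fin r), a.card = u ∧ a ∉ F ∧ b ∈ F ∧
      EdgeIso (insert a (F.erase b)) F))

/-- `h` is an `F`-edge on `[n]`: a copy of `F`, recorded as its (`r`-element) vertex set
together with its `u`-edge set. -/
def IsFEdge {r : ℕ} (F : Finset (Finset (Fin r))) (n : ℕ) (h : FE n) : Prop :=
  ∃ φ : Fin r ↪ Fin n, h.1 = Finset.univ.map φ ∧ h.2 = F.image (fun e => e.map φ)

/-- All possible `F`-edges on `[n]`. -/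
def allFEdges {r : ℕ} (F : Finset (Finset (Fin r))) (n : ℕ) : Finset (FE n) :=
  Finset.univ.filter (fun h => IsFEdge F n h)

/-- `M`, the total number of `F`-edges on `[n]`. -/
def Mnum {r : ℕ} (F : Finset (Finset (Fin r))) (n : ℕ) : ℕ := (allFEdges F n).card

/-- All `u`-element subsets of `[n]`. -/
def allUEdges (u n : ℕ) : Finset (Finset (Fin n)) :=
  Finset.univ.filter (fun e : Finset (Fin n) => e.card = u)

/-- The number of automorphisms of `F`. -/
def autCard {r : ℕ} (F : Finset (Finset (Fin r))) : ℕ :=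
  Fintype.card {σ : Equiv.Perm (Fin r) // F.image (fun e => e.image (fun x => σ x)) = F}

/-- The degree of a vertex `v` in an `F`-graph `H`. -/
def degFE {n : ℕ} (H : Finset (FE n)) (v : Fin n) : ℕ :=
  (H.filter (fun h => v ∈ h.1)).card

/-- Two `F`-edges are partners if their vertex sets share exactly `u` vertices. -/
def Partner (u : ℕ) {n : ℕ} (h h' : FE n) : Prop :=
  h ≠ h' ∧ (h.1 ∩ h'.1).card = u

/-- The state at time `t` of the process induced by the ordering `f`. -/
def proc {α : Type*} [DecidableEq α] {m : ℕ} (f : Fin m → α) (t : ℕ) : Finset α :=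
  (Finset.univ.filter (fun i : Fin m => (i : ℕ) < t)).image f

/-- A valid ordering of all `u`-element subsets of `[n]`. -/
def ValidOrdU (u n : ℕ) (f : Fin (Nat.choose n u) → Finset (Fin n)) : Prop :=
  Function.Injective f ∧ ∀ e : Finset (Fin n), e.card = u → ∃ i, f i = e

/-- A valid ordering of all `r`-element subsets of `[n]`. -/
def ValidOrdR (r n : ℕ) (f : Fin (Nat.choose n r) → Finset (Fin n)) : Prop :=
  Function.Injective f ∧ ∀ e : Finset (Fin n), e.card = r → ∃ i, f i = e

/-- A valid ordering of all `F`-edges on `[n]`. -/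
def ValidOrdH {r : ℕ} (F : Finset (Finset (Fin r))) (n : ℕ)
    (f : Fin (Mnum F n) → FE n) : Prop :=
  Function.Injective f ∧ ∀ h : FE n, IsFEdge F n h → ∃ i, f i = h

/-- `T_H`: the first time at which the `F`-graph process has no isolated vertices. -/
def THit {r : ℕ} (F : Finset (Finset (Fin r))) (n : ℕ) (f : Fin (Mnum F n) → FE n) : ℕ :=
  sInf {t : ℕ | ∀ v : Fin n, ∃ h ∈ proc f t, v ∈ h.1}

/-- `T_E`: the first time at which the `r`-uniform hypergraph process has no isolated
vertices. -/
def TEHit (r n : ℕ) (f : Fin (Nat.choose n r) → Finset (Fin n)) : ℕ :=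
  sInf {t : ℕ | ∀ v : Fin n, ∃ e ∈ proc f t, v ∈ e}

/-- `T_G`: the first time at which every vertex of `[n]` lies in a copy of `F` in the
`u`-graph process. -/
def TGHit (u : ℕ) {r : ℕ} (F : Finset (Finset (Fin r))) (n : ℕ)
    (f : Fin (Nat.choose n u) → Finset (Fin n)) : ℕ :=
  sInf {t : ℕ | ∀ v : Fin n, ∃ h : FE n, IsFEdge F n h ∧ v ∈ h.1 ∧ h.2 ⊆ proc f t}

/-- The random variable `X` is uniformly distributed over `{a | P a}` under `μ`. -/
def UniformOn {Ω α : Type*} (μ : PMF Ω) (X : Ω → α) (P : α → Prop) : Prop :=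
  μ.toOuterMeasure {ω | P (X ω)} = 1 ∧
    ∀ a b : α, P a → P b →
      μ.toOuterMeasure {ω | X ω = a} = μ.toOuterMeasure {ω | X ω = b}

/-- Under `μ`, the random set `X` contains each element of `all` independently with
probability `p` (a Bernoulli product / binomial random subset distribution). -/
def BernoulliVia {Ω E : Type*} (μ : PMF Ω) (X : Ω → Finset E)
    (all : Finset E) (p : ℝ) : Prop :=
  ∀ A : Finset E, μ.toOuterMeasure {ω | X ω = A} =
    if A ⊆ all then ENNReal.ofReal (p ^ A.card * (1 - p) ^ (all.card - A.card)) else 0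

/-- The function `g` tends to infinity and is `o(log n / log log n)`. -/
def GoodG (g : ℕ → ℝ) : Prop :=
  Tendsto g atTop atTop ∧ g =o[atTop] fun n : ℕ => Real.log n / Real.log (Real.log n)

/-- `π₊`, the probability at the end of the critical window. -/
def piPlus {r : ℕ} (F : Finset (Finset (Fin r))) (g : ℕ → ℝ) (n : ℕ) : ℝ :=
  ((autCard F : ℝ) / (Nat.factorial r : ℝ)) *
    ((Real.log n + g n) / ((n - 1).choose (r - 1) : ℝ))

/-- `π₋`, the probability at the start of the critical window. -/
def piMinus {r : ℕ} (F : Finset (Finset (Fin r))) (g : ℕ → ℝ) (n : ℕ) : ℝ :=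
  ((autCard F : ℝ) / (Nat.factorial r : ℝ)) *
    ((Real.log n - g n) / ((n - 1).choose (r - 1) : ℝ))

/-- `p₊ = (π₊/(1-n^{-δ}))^{1/s}` where `s = e(F)`. -/
def pPlus {r : ℕ} (F : Finset (Finset (Fin r))) (g : ℕ → ℝ) (δ : ℝ) (n : ℕ) : ℝ :=
  (piPlus F g n / (1 - (n : ℝ) ^ (-δ))) ^ ((1 : ℝ) / (F.card : ℝ))

/-- Connectivity (as a multihypergraph of vertex sets) of a set of `F`-edges. -/
def ConnFE {n : ℕ} (S : Finset (FE n)) : Prop :=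
  ∀ a ∈ S, ∀ b ∈ S,
    Relation.ReflTransGen (fun x y : FE n => x ∈ S ∧ y ∈ S ∧ (x.1 ∩ y.1).Nonempty) a b

/-- The multihypergraph of vertex sets of the `F`-edges of `H` contains an avoidable
configuration: a connected `S ⊆ H` with nullity `(r-1)e(S)+1-v(S) > 1` and
`e(S) ≤ 2^(r+1)`. -/
def HasAvoidable (r : ℕ) {n : ℕ} (H : Finset (FE n)) : Prop :=
  ∃ S ⊆ H, S.Nonempty ∧ ConnFE S ∧
    (S.sup Prod.fst).card < (r - 1) * S.card ∧ S.card ≤ 2 ^ (r + 1)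

/-- `G` contains an `F`-factor: pairwise vertex-disjoint copies of `F`, each a subgraph
of `G`, whose vertex sets partition `[n]`. -/
def HasFFactor {r : ℕ} (F : Finset (Finset (Fin r))) (n : ℕ)
    (G : Finset (Finset (Fin n))) : Prop :=
  ∃ C : Finset (FE n), (∀ h ∈ C, IsFEdge F n h ∧ h.2 ⊆ G) ∧
    (∀ h ∈ C, ∀ h' ∈ C, h ≠ h' → Disjoint h.1 h'.1) ∧
    C.sup Prod.fst = Finset.univ ∧ C.card * r = n

section Aux
variable {E : Type*} [Fintype E] [DecidableEq E]

lemma bern_pmf_val (μ : PMF (Finset E)) (all : Finset E) (p : ℝ)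
    (hμ : BernoulliVia μ id all p) (A : Finset E) :
    μ A = if A ⊆ all then ENNReal.ofReal (p ^ A.card * (1 - p) ^ (all.card - A.card)) else 0 := by
  have h := hμ A
  have hset : {ω : Finset E | id ω = A} = ({A} : Set (Finset E)) := by ext x; simp
  rw [hset, PMF.toOuterMeasure_apply_singleton] at h
  convert h using 2

lemma bern_prob_eq (μ : PMF (Finset E)) (all : Finset E) (p : ℝ)
    (hp : 0 ≤ p) (hp1 : p ≤ 1) (hμ : BernoulliVia μ id all p) (P : Finset E → Prop) :
    μ.toOuterMeasure {H | P H} =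
      ENNReal.ofReal (∑ H ∈ all.powerset.filter P,
        p ^ H.card * (1 - p) ^ (all.card - H.card)) := by
  rw [PMF.toOuterMeasure_apply_fintype]
  have key : ∀ H : Finset E, ({H | P H} : Set (Finset E)).indicator (⇑μ) H =
      if P H ∧ H ⊆ all then
        ENNReal.ofReal (p ^ H.card * (1 - p) ^ (all.card - H.card)) else 0 := by
    intro H
    rw [Set.indicator_apply, bern_pmf_val μ all p hμ H]
    by_cases h1 : P H <;> by_cases h2 : H ⊆ all <;> simp [h1, h2]
  simp_rw [key]
  rw [← Finset.sum_filter]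
  have hfe : Finset.univ.filter (fun H : Finset E => P H ∧ H ⊆ all)
      = all.powerset.filter P := by
    ext H; simp [Finset.mem_powerset, and_comm]
  rw [hfe, ← ENNReal.ofReal_sum_of_nonneg]
  intro H _
  exact mul_nonneg (pow_nonneg hp _) (pow_nonneg (by linarith) _)

lemma bern_sum_superset_le (all S : Finset E) (p : ℝ)
    (hp : 0 ≤ p) (hp1 : p ≤ 1) (hS : S ⊆ all) :
    ∑ H ∈ all.powerset.filter (fun H => S ⊆ H),
        p ^ H.card * (1 - p) ^ (all.card - H.card) ≤ p ^ S.card := by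
  have hfg : ∑ t ∈ all.powerset,
      (∏ _i ∈ t, p) * ∏ i ∈ all \ t, (if i ∈ S then 0 else 1 - p) = p ^ S.card := by
    rw [← Finset.prod_add]
    have hc : ∀ x ∈ all, (p + if x ∈ S then 0 else 1 - p) = (if x ∈ S then p else 1) := by
      intro x _; split <;> ring
    rw [Finset.prod_congr rfl hc, Finset.prod_ite_mem, Finset.inter_eq_right.mpr hS,
      Finset.prod_const]
  calc ∑ H ∈ all.powerset.filter (fun H => S ⊆ H),
        p ^ H.card * (1 - p) ^ (all.card - H.card)
      = ∑ t ∈ all.powerset.filter (fun H => S ⊆ H),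
        (∏ _i ∈ t, p) * ∏ i ∈ all \ t, (if i ∈ S then 0 else 1 - p) := by
        refine Finset.sum_congr rfl fun t ht => ?_
        simp only [Finset.mem_filter, Finset.mem_powerset] at ht
        rw [Finset.prod_const]
        congr 1
        have : ∀ i ∈ all \ t, (if i ∈ S then 0 else 1 - p) = 1 - p := by
          intro i hi
          simp only [Finset.mem_sdiff] at hi
          have : i ∉ S := fun h => hi.2 (ht.2 h)
          simp [this]
        rw [Finset.prod_congr rfl this, Finset.prod_const, Finset.card_sdiff_of_subset ht.1]
    _ ≤ ∑ t ∈ all.powerset,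
        (∏ _i ∈ t, p) * ∏ i ∈ all \ t, (if i ∈ S then 0 else 1 - p) := by
        refine Finset.sum_le_sum_of_subset_of_nonneg (Finset.filter_subset _ _) ?_
        intro t _ _
        refine mul_nonneg (Finset.prod_nonneg fun _ _ => hp)
          (Finset.prod_nonneg fun i _ => ?_)
        split <;> linarith
    _ = p ^ S.card := hfg

lemma bern_sum_deg_le (all Ev : Finset E) (p B : ℝ)
    (hp : 0 ≤ p) (hp1 : p ≤ 1) (hEv : Ev ⊆ all) (hB : 0 ≤ B) :
    ∑ H ∈ all.powerset.filter (fun H => B < ((H ∩ Ev).card : ℝ)),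
        p ^ H.card * (1 - p) ^ (all.card - H.card)
      ≤ (2:ℝ) ^ (-B) * (1 + p) ^ Ev.card := by
  set f : E → ℝ := fun i => if i ∈ Ev then 2 * p else p with hf
  have hprodf : ∀ t : Finset E, (∏ i ∈ t, f i) = 2 ^ (t ∩ Ev).card * p ^ t.card := by
    intro t
    have : ∀ i ∈ t, f i = p * (if i ∈ Ev then 2 else 1) := by
      intro i _; simp only [hf]; split <;> ring
    rw [Finset.prod_congr rfl this, Finset.prod_mul_distrib, Finset.prod_const,
      Finset.prod_ite_mem, Finset.prod_const]
    ring
  have hfg : ∑ t ∈ all.powerset, (∏ i ∈ t, f i) * ∏ _i ∈ all \ t, (1 - p)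
      = (1 + p) ^ Ev.card := by
    rw [← Finset.prod_add]
    have hc : ∀ x ∈ all, (f x + (1 - p)) = (if x ∈ Ev then 1 + p else 1) := by
      intro x _; simp only [hf]; split <;> ring
    rw [Finset.prod_congr rfl hc, Finset.prod_ite_mem, Finset.inter_eq_right.mpr hEv,
      Finset.prod_const]
  have hstep : ∑ H ∈ all.powerset.filter (fun H => B < ((H ∩ Ev).card : ℝ)),
        p ^ H.card * (1 - p) ^ (all.card - H.card)
      ≤ ∑ H ∈ all.powerset.filter (fun H => B < ((H ∩ Ev).card : ℝ)),
        (2:ℝ) ^ (-B) * ((∏ i ∈ H, f i) * ∏ _i ∈ all \ H, (1 - p)) := by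
    refine Finset.sum_le_sum fun H hH => ?_
    simp only [Finset.mem_filter, Finset.mem_powerset] at hH
    rw [hprodf, Finset.prod_const, Finset.card_sdiff_of_subset hH.1]
    have h1p : (0:ℝ) ≤ 1 - p := by linarith
    have hterm : (0:ℝ) ≤ p ^ H.card * (1 - p) ^ (all.card - H.card) :=
      mul_nonneg (pow_nonneg hp _) (pow_nonneg h1p _)
    have h2 : (1:ℝ) ≤ (2:ℝ) ^ (-B) * 2 ^ (H ∩ Ev).card := by
      have h2a : ((2:ℝ) ^ (H ∩ Ev).card : ℝ) = (2:ℝ) ^ (((H ∩ Ev).card : ℝ)) := by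
        rw [Real.rpow_natCast]
      rw [h2a, ← Real.rpow_add (by norm_num)]
      refine Real.one_le_rpow (by norm_num) ?_
      have := hH.2
      linarith
    calc p ^ H.card * (1 - p) ^ (all.card - H.card)
        = 1 * (p ^ H.card * (1 - p) ^ (all.card - H.card)) := by ring
      _ ≤ ((2:ℝ) ^ (-B) * 2 ^ (H ∩ Ev).card) * (p ^ H.card * (1 - p) ^ (all.card - H.card)) :=
          mul_le_mul_of_nonneg_right h2 hterm
      _ = (2:ℝ) ^ (-B) * (2 ^ (H ∩ Ev).card * p ^ H.card * (1 - p) ^ (all.card - H.card)) := by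
          ring
  refine hstep.trans ?_
  rw [← Finset.mul_sum]
  refine mul_le_mul_of_nonneg_left ?_ (Real.rpow_nonneg (by norm_num) _)
  rw [← hfg]
  refine Finset.sum_le_sum_of_subset_of_nonneg (Finset.filter_subset _ _) fun t _ _ => ?_
  refine mul_nonneg (Finset.prod_nonneg fun i _ => ?_) (Finset.prod_nonneg fun _ _ => by linarith)
  simp only [hf]; split <;> [linarith; exact hp]

end Aux

lemma sum_biUnion_le' {β ι : Type*} [DecidableEq β] (I : Finset ι) (g : ι → Finset β)
    (w : β → ℝ) (hw : ∀ b, 0 ≤ w b) :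
    ∑ b ∈ I.biUnion g, w b ≤ ∑ i ∈ I, ∑ b ∈ g i, w b := by
  classical
  induction I using Finset.induction with
  | empty => simp
  | @insert a I ha ih =>
    rw [Finset.biUnion_insert, Finset.sum_insert ha]
    have h1 := Finset.sum_union_inter (s₁ := g a) (s₂ := I.biUnion g) (f := w)
    have h2 : 0 ≤ ∑ b ∈ (g a ∩ I.biUnion g), w b := Finset.sum_nonneg fun b _ => hw b
    linarith

lemma deg_exponent_le (a L l2 : ℝ) (ha : 0 ≤ a) (hL : 0 ≤ L)
    (h1 : 0.69 ≤ l2) (h2 : l2 ≤ 0.7) :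
    a - (a + max a (3*L)) * l2 ≤ -(6*l2 - 3) * L := by
  rcases le_total a (3*L) with h | h
  · rw [max_eq_right h]
    nlinarith [mul_nonneg (sub_nonneg.mpr h) (by linarith : (0:ℝ) ≤ 1 - l2)]
  · rw [max_eq_left h]
    nlinarith [mul_nonneg (sub_nonneg.mpr h) (by linarith : (0:ℝ) ≤ 2*l2 - 1)]

lemma tendsto_deg_bound :
    Tendsto (fun n : ℕ => (n:ℝ) * Real.exp (-(6*Real.log 2 - 3) * Real.log n))
      atTop (nhds 0) := by
  have hc : (0:ℝ) < 6*Real.log 2 - 4 := by nlinarith [Real.log_two_gt_d9]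
  have hcomp : Tendsto (fun n : ℕ => ((n:ℝ)) ^ (-(6*Real.log 2 - 4))) atTop (nhds 0) :=
    (tendsto_rpow_neg_atTop hc).comp tendsto_natCast_atTop_atTop
  refine Tendsto.congr' ?_ hcomp
  filter_upwards [eventually_ge_atTop 1] with n hn
  have hn0 : (0:ℝ) < n := by exact_mod_cast hn
  rw [Real.rpow_def_of_pos hn0,
    show Real.log n * -(6*Real.log 2 - 4)
      = Real.log n + (-(6*Real.log 2 - 3) * Real.log n) by ring,
    Real.exp_add, Real.exp_log hn0]

lemma avoid_term_le (r n s K : ℕ) (hr : 4 ≤ r) (hn : 1 ≤ n) (hs : 1 ≤ s) (hsK : s ≤ K)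
    (hK : 1 ≤ K) (p : ℝ) (hp0 : 0 ≤ p)
    (hple : p ≤ (n:ℝ) ^ (1 - (r:ℝ) + 1/(2*K))) :
    (n:ℝ) ^ ((r-1)*s - 1 : ℕ) * p ^ s ≤ (n:ℝ) ^ (-(1/2) : ℝ) := by
  have hn0 : (0:ℝ) < n := by exact_mod_cast hn
  have hn1 : (1:ℝ) ≤ n := by exact_mod_cast hn
  set e : ℝ := 1 - (r:ℝ) + 1/(2*K) with he
  have h1 : p ^ s ≤ ((n:ℝ) ^ e) ^ s :=
    pow_le_pow_left₀ hp0 hple s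
  have h2 : ((n:ℝ) ^ e) ^ s = (n:ℝ) ^ (e * s) := by
    rw [← Real.rpow_natCast ((n:ℝ) ^ e) s, ← Real.rpow_mul hn0.le]
  have h3 : ((n:ℝ) ^ ((r-1)*s - 1 : ℕ)) = (n:ℝ) ^ ((((r-1)*s - 1 : ℕ)) : ℝ) :=
    (Real.rpow_natCast _ _).symm
  have hcast : ((((r-1)*s - 1 : ℕ)) : ℝ) = ((r:ℝ) - 1) * s - 1 := by
    have h4 : 1 ≤ (r-1)*s := by
      have : 1 ≤ r - 1 := by omega
      exact Nat.one_le_iff_ne_zero.mpr (by positivity)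
    push_cast [Nat.cast_sub h4, Nat.cast_sub (by omega : 1 ≤ r)]
    ring
  calc (n:ℝ) ^ ((r-1)*s - 1 : ℕ) * p ^ s
      ≤ (n:ℝ) ^ ((((r-1)*s - 1 : ℕ)) : ℝ) * (n:ℝ) ^ (e * s) := by
        rw [← h3]
        exact mul_le_mul_of_nonneg_left (h1.trans_eq h2) (by positivity)
    _ = (n:ℝ) ^ (((((r-1)*s - 1 : ℕ)) : ℝ) + e * s) := (Real.rpow_add hn0 _ _).symm
    _ ≤ (n:ℝ) ^ (-(1/2) : ℝ) := by
        refine Real.rpow_le_rpow_of_exponent_le hn1 ?_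
        rw [hcast, he]
        have hK0 : (0:ℝ) < 2*K := by positivity
        have hsK' : (s:ℝ) ≤ K := by exact_mod_cast hsK
        have : (s:ℝ) * (1/(2*K)) ≤ (K:ℝ) * (1/(2*K)) := by
          apply mul_le_mul_of_nonneg_right hsK'; positivity
        have hKK : (K:ℝ) * (1/(2*K)) = 1/2 := by
          field_simp
        nlinarith

lemma tendsto_avoid_bound (C : ℝ) :
    Tendsto (fun n : ℕ => C * (n:ℝ) ^ (-(1/2) : ℝ)) atTop (nhds 0) := by
  have := ((tendsto_rpow_neg_atTop (by norm_num : (0:ℝ) < 1/2)).comp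
    tendsto_natCast_atTop_atTop).const_mul C
  simpa using this

section Count
variable {r n : ℕ} (F : Finset (Finset (Fin r)))

lemma isFEdge_vcard {h : FE n} (hh : IsFEdge F n h) : h.1.card = r := by
  obtain ⟨φ, h1, -⟩ := hh
  rw [h1, Finset.card_map, Finset.card_univ, Fintype.card_fin]

lemma isFEdge_image_perm (σ : Equiv.Perm (Fin n)) {h : FE n} (hh : IsFEdge F n h) :
    IsFEdge F n (h.1.image σ, h.2.image (fun e => e.image σ)) := by
  obtain ⟨φ, h1, h2⟩ := hh
  refine ⟨φ.trans σ.toEmbedding, ?_, ?_⟩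
  · simp only [h1, Finset.map_eq_image, Finset.image_image]
    exact Finset.image_congr fun x _ => rfl
  · simp only [h2, Finset.image_image]
    refine Finset.image_congr fun e _ => ?_
    simp only [Finset.map_eq_image, Finset.image_image, Function.comp_apply]
    exact Finset.image_congr fun x _ => rfl

lemma Ev_card_swap (v w : Fin n) :
    ((allFEdges F n).filter (fun h => v ∈ h.1)).card
      = ((allFEdges F n).filter (fun h => w ∈ h.1)).card := by
  set σ := Equiv.swap v w with hσ
  have hinv : ∀ h : FE n, ((h.1.image σ).image σ,
      ((h.2.image (fun e => e.image σ)).image (fun e => e.image σ))) = h := by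
    intro h
    have h1 : (h.1.image σ).image σ = h.1 := by
      rw [Finset.image_image]
      have : (⇑σ ∘ ⇑σ) = id := by
        funext x; simp [hσ, Equiv.swap_apply_self]
      rw [this, Finset.image_id]
    have h2 : (h.2.image (fun e => e.image σ)).image (fun e => e.image σ) = h.2 := by
      rw [Finset.image_image]
      have : ((fun e : Finset (Fin n) => e.image σ) ∘ (fun e => e.image σ)) = id := by
        funext e
        simp only [Function.comp_apply, Finset.image_image, id_eq]
        have : (⇑σ ∘ ⇑σ) = id := by funext x; simp [hσ, Equiv.swap_apply_self]
        rw [this, Finset.image_id]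
      rw [this, Finset.image_id]
    exact Prod.ext h1 h2
  refine Finset.card_bij' (fun h _ => (h.1.image σ, h.2.image (fun e => e.image σ)))
    (fun h _ => (h.1.image σ, h.2.image (fun e => e.image σ))) ?_ ?_
    (fun h _ => hinv h) (fun h _ => hinv h)
  · intro h hh
    simp only [Finset.mem_filter, allFEdges, Finset.mem_univ, true_and] at hh ⊢
    refine ⟨isFEdge_image_perm F σ hh.1, ?_⟩
    have hv : σ v ∈ h.1.image σ := Finset.mem_image_of_mem _ hh.2
    simpa [hσ, Equiv.swap_apply_left] using hv
  · intro h hh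
    simp only [Finset.mem_filter, allFEdges, Finset.mem_univ, true_and] at hh ⊢
    refine ⟨isFEdge_image_perm F σ hh.1, ?_⟩
    have hw : σ w ∈ h.1.image σ := Finset.mem_image_of_mem _ hh.2
    simpa [hσ, Equiv.swap_apply_right] using hw

lemma nEv_eq (v : Fin n) :
    n * ((allFEdges F n).filter (fun h => v ∈ h.1)).card = r * Mnum F n := by
  have hsum : ∑ w : Fin n, ((allFEdges F n).filter (fun h => w ∈ h.1)).card
      = r * Mnum F n := by
    have h1 : ∀ w : Fin n, ((allFEdges F n).filter (fun h => w ∈ h.1)).card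
        = ∑ h ∈ allFEdges F n, if w ∈ h.1 then 1 else 0 := fun w => Finset.card_filter _ _
    simp_rw [h1]
    rw [Finset.sum_comm]
    have h2 : ∀ h ∈ allFEdges F n, (∑ w : Fin n, if w ∈ h.1 then 1 else 0) = r := by
      intro h hh
      rw [← Finset.card_filter]
      have : Finset.univ.filter (fun w => w ∈ h.1) = h.1 := by ext w; simp
      rw [this]
      exact isFEdge_vcard F (by simpa [allFEdges] using hh)
    rw [Finset.sum_congr rfl h2, Finset.sum_const, Mnum, smul_eq_mul, Nat.mul_comm]
  rw [← hsum]
  have hc : ∀ w : Fin n, ((allFEdges F n).filter (fun h => w ∈ h.1)).card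
      = ((allFEdges F n).filter (fun h => v ∈ h.1)).card := fun w => Ev_card_swap F w v
  rw [Finset.sum_congr rfl (fun w _ => hc w), Finset.sum_const, Finset.card_univ,
    Fintype.card_fin, smul_eq_mul]

lemma EV_card_le (V : Finset (Fin n)) :
    ((allFEdges F n).filter (fun h => h.1 ⊆ V)).card ≤ V.card ^ r := by
  have hsub : (allFEdges F n).filter (fun h => h.1 ⊆ V) ⊆
      (Fintype.piFinset (fun _ : Fin r => V)).image
        (fun f => (Finset.univ.image f, F.image (fun e => e.image f))) := by
    intro h hh
    simp only [Finset.mem_filter, allFEdges, Finset.mem_univ, true_and] at hh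
    obtain ⟨⟨φ, h1, h2⟩, hV⟩ := hh
    refine Finset.mem_image.mpr ⟨⇑φ, ?_, ?_⟩
    · rw [Fintype.mem_piFinset]
      intro i
      exact hV (h1 ▸ Finset.mem_map_of_mem φ (Finset.mem_univ i))
    · refine Prod.ext ?_ ?_
      · rw [h1, Finset.map_eq_image]
      · rw [h2]
        exact Finset.image_congr fun e _ => (Finset.map_eq_image φ e).symm
  calc ((allFEdges F n).filter (fun h => h.1 ⊆ V)).card
      ≤ _ := Finset.card_le_card hsub
    _ ≤ (Fintype.piFinset (fun _ : Fin r => V)).card := Finset.card_image_le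
    _ = V.card ^ r := by rw [Fintype.card_piFinset, Finset.prod_const, Finset.card_univ,
        Fintype.card_fin]

lemma badS_card_le (hn : 1 ≤ n) (s : ℕ) (hK : 1 ≤ (r-1)*s) :
    (((allFEdges F n).powerset).filter
      (fun S => S.card = s ∧ (S.sup Prod.fst).card < (r-1) * s)).card
      ≤ (r-1)*s * n ^ ((r-1)*s - 1) * (((r-1)*s)^r) ^ s := by
  set K := (r-1)*s with hKdef
  have hsub : ((allFEdges F n).powerset).filter
      (fun S => S.card = s ∧ (S.sup Prod.fst).card < K) ⊆
      ((Finset.univ : Finset (Finset (Fin n))).filter (fun V => V.card ≤ K - 1)).biUnion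
        (fun V => ((allFEdges F n).filter (fun h => h.1 ⊆ V)).powersetCard s) := by
    intro S hS
    simp only [Finset.mem_filter, Finset.mem_powerset] at hS
    obtain ⟨hSall, hcard, hsup⟩ := hS
    refine Finset.mem_biUnion.mpr ⟨S.sup Prod.fst, ?_, ?_⟩
    · simp only [Finset.mem_filter, Finset.mem_univ, true_and]
      omega
    · rw [Finset.mem_powersetCard]
      exact ⟨fun h hh => Finset.mem_filter.mpr ⟨hSall hh, Finset.le_sup hh⟩, hcard⟩
  refine (Finset.card_le_card hsub).trans (Finset.card_biUnion_le.trans ?_)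
  have hterm : ∀ V ∈ ((Finset.univ : Finset (Finset (Fin n))).filter (fun V => V.card ≤ K - 1)),
      (((allFEdges F n).filter (fun h => h.1 ⊆ V)).powersetCard s).card ≤ (K^r) ^ s := by
    intro V hV
    simp only [Finset.mem_filter] at hV
    rw [Finset.card_powersetCard]
    calc (((allFEdges F n).filter (fun h => h.1 ⊆ V)).card).choose s
        ≤ (((allFEdges F n).filter (fun h => h.1 ⊆ V)).card) ^ s := Nat.choose_le_pow _ _
      _ ≤ (V.card ^ r) ^ s := Nat.pow_le_pow_left (EV_card_le F V) s
      _ ≤ (K ^ r) ^ s := Nat.pow_le_pow_left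
          (Nat.pow_le_pow_left (hV.2.trans (Nat.sub_le K 1)) r) s
  refine (Finset.sum_le_sum hterm).trans ?_
  rw [Finset.sum_const, smul_eq_mul]
  have hVcount : (((Finset.univ : Finset (Finset (Fin n))).filter
      (fun V => V.card ≤ K - 1))).card ≤ K * n ^ (K - 1) := by
    have heq : ((Finset.univ : Finset (Finset (Fin n))).filter (fun V => V.card ≤ K - 1))
        = (Finset.range K).biUnion (fun j => Finset.powersetCard j Finset.univ) := by
      ext V
      simp only [Finset.mem_filter, Finset.mem_univ, true_and, Finset.mem_biUnion,
        Finset.mem_range, Finset.mem_powersetCard, Finset.subset_univ]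
      constructor
      · intro hc; exact ⟨V.card, by omega, rfl⟩
      · rintro ⟨j, hj, rfl⟩; omega
    rw [heq]
    refine Finset.card_biUnion_le.trans ?_
    have hterm2 : ∀ j ∈ Finset.range K, (Finset.powersetCard j
        (Finset.univ : Finset (Fin n))).card ≤ n ^ (K - 1) := by
      intro j hj
      rw [Finset.card_powersetCard, Finset.card_univ, Fintype.card_fin]
      calc n.choose j ≤ n ^ j := Nat.choose_le_pow n j
        _ ≤ n ^ (K - 1) := Nat.pow_le_pow_right hn (by simp only [Finset.mem_range] at hj; omega)
    refine (Finset.sum_le_sum hterm2).trans ?_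
    rw [Finset.sum_const, smul_eq_mul, Finset.card_range]
  exact Nat.mul_le_mul_right _ hVcount

end Count

set_option maxHeartbeats 2000000 in
lemma deg_vertex_bound {r n : ℕ} (F : Finset (Finset (Fin r))) (μ : PMF (Finset (FE n)))
    (p : ℝ) (hp0 : 0 ≤ p) (hp1 : p ≤ 1) (hμ : BernoulliVia μ id (allFEdges F n) p)
    (hn : 1 ≤ n) (v : Fin n) :
    μ.toOuterMeasure {H | ¬ ((degFE H v : ℝ) ≤
        (r:ℝ)/n * (Mnum F n : ℝ) * p + max ((r:ℝ)/n * (Mnum F n : ℝ) * p) (3 * Real.log n))}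
      ≤ ENNReal.ofReal (Real.exp (-(6*Real.log 2 - 3) * Real.log n)) := by
  set all := allFEdges F n with hall
  set Ev := all.filter (fun h => v ∈ h.1) with hEv
  set db : ℝ := (r:ℝ)/n * (Mnum F n : ℝ) * p with hdb
  set B : ℝ := db + max db (3 * Real.log n) with hB
  have hn0 : (0:ℝ) < n := by exact_mod_cast hn
  have hdb0 : 0 ≤ db := by
    rw [hdb]
    have : (0:ℝ) ≤ (r:ℝ)/n := by positivity
    positivity
  have hL0 : 0 ≤ Real.log n := Real.log_natCast_nonneg n
  have hB0 : 0 ≤ B := by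
    rw [hB]
    have := le_max_left db (3 * Real.log n)
    linarith
  have hmp : (Ev.card : ℝ) * p = db := by
    have h1 := nEv_eq F v
    have h2 : (n:ℝ) * (Ev.card : ℝ) = (r:ℝ) * (Mnum F n : ℝ) := by
      rw [hEv, hall]; exact_mod_cast h1
    rw [hdb]
    field_simp
    nlinarith [h2]
  rw [bern_prob_eq μ all p hp0 hp1 hμ]
  have step1 : ∀ (T : Finset (Finset (FE n))),
      T ⊆ all.powerset.filter (fun H => B < ((H ∩ Ev).card : ℝ)) →
      ENNReal.ofReal (∑ H ∈ T, p ^ H.card * (1 - p) ^ (all.card - H.card))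
        ≤ ENNReal.ofReal ((2:ℝ) ^ (-B) * (1 + p) ^ Ev.card) := by
    intro T hT
    refine ENNReal.ofReal_le_ofReal ?_
    refine le_trans (Finset.sum_le_sum_of_subset_of_nonneg hT fun H _ _ =>
      mul_nonneg (pow_nonneg hp0 _) (pow_nonneg (by linarith) _)) ?_
    exact bern_sum_deg_le all Ev p B hp0 hp1 (Finset.filter_subset _ _) hB0
  refine le_trans (step1 _ ?_) ?_
  · intro H hH
    simp only [Finset.mem_filter] at hH
    obtain ⟨h1, h2⟩ := hH
    have hHall := Finset.mem_powerset.mp h1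
    have hdeg : degFE H v = (H ∩ Ev).card := by
      unfold degFE
      congr 1
      ext h
      have hha : h ∈ H → h ∈ all := fun hx => hHall hx
      simp only [Finset.mem_filter, Finset.mem_inter, hEv]
      tauto
    refine Finset.mem_filter.mpr ⟨h1, ?_⟩
    rw [← hdeg, ← not_le]
    exact h2
  refine ENNReal.ofReal_le_ofReal ?_
  have h2B : (2:ℝ) ^ (-B) = Real.exp (Real.log 2 * (-B)) := by
    rw [Real.rpow_def_of_pos (by norm_num)]
  have hexp : (1 + p) ^ Ev.card ≤ Real.exp ((Ev.card : ℝ) * p) := by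
    calc (1 + p) ^ Ev.card ≤ (Real.exp p) ^ Ev.card := by
          refine pow_le_pow_left₀ (by linarith) ?_ _
          linarith [Real.add_one_le_exp p]
      _ = Real.exp ((Ev.card : ℝ) * p) := (Real.exp_nat_mul p Ev.card).symm
  calc (2:ℝ) ^ (-B) * (1 + p) ^ Ev.card
      ≤ Real.exp (Real.log 2 * (-B)) * Real.exp ((Ev.card : ℝ) * p) := by
        rw [h2B]
        exact mul_le_mul_of_nonneg_left hexp (Real.exp_nonneg _)
    _ = Real.exp (db - B * Real.log 2) := by
        rw [← Real.exp_add, hmp]; ring_nf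
    _ ≤ Real.exp (-(6*Real.log 2 - 3) * Real.log n) := by
        refine Real.exp_le_exp.mpr ?_
        have := deg_exponent_le db (Real.log n) (Real.log 2) hdb0 hL0
          (by linarith [Real.log_two_gt_d9]) (by linarith [Real.log_two_lt_d9])
        calc db - B * Real.log 2 = db - (db + max db (3 * Real.log n)) * Real.log 2 := by
              rw [hB]
          _ ≤ -(6*Real.log 2 - 3) * Real.log n := this

def avoidConst (r : ℕ) : ℕ :=
  (2^(r+1) + 1) * ((r-1)*2^(r+1) * (((r-1)*2^(r+1))^r)^(2^(r+1)))

set_option maxHeartbeats 2000000 in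
lemma avoid_bound {r n : ℕ} (F : Finset (Finset (Fin r))) (hr : 4 ≤ r)
    (μ : PMF (Finset (FE n))) (p : ℝ) (hp0 : 0 ≤ p) (hp1 : p ≤ 1)
    (hμ : BernoulliVia μ id (allFEdges F n) p) (hn : 1 ≤ n)
    (hple : p ≤ (n:ℝ) ^ (1 - (r:ℝ) + 1/(2*((2^(r+1) : ℕ) : ℝ)))) :
    μ.toOuterMeasure {H | HasAvoidable r H}
      ≤ ENNReal.ofReal ((avoidConst r : ℝ) * (n:ℝ) ^ (-(1/2):ℝ)) := by
  set all := allFEdges F n with hall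
  set K : ℕ := 2^(r+1) with hKdef
  have hK1 : 1 ≤ K := Nat.one_le_two_pow
  have hw : ∀ H : Finset (FE n), 0 ≤ p ^ H.card * (1-p) ^ (all.card - H.card) :=
    fun H => mul_nonneg (pow_nonneg hp0 _) (pow_nonneg (by linarith) _)
  rw [bern_prob_eq μ all p hp0 hp1 hμ]
  refine ENNReal.ofReal_le_ofReal ?_
  set badS := all.powerset.filter (fun S : Finset (FE n) =>
      S.Nonempty ∧ S.card ≤ K ∧ (S.sup Prod.fst).card < (r-1)*S.card) with hbadS
  have step1 : (∑ H ∈ all.powerset.filter (fun H => HasAvoidable r H),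
      p ^ H.card * (1 - p) ^ (all.card - H.card)) ≤ ∑ S ∈ badS, p ^ S.card := by
    have hsub : all.powerset.filter (fun H => HasAvoidable r H) ⊆
        badS.biUnion (fun S => all.powerset.filter (fun H => S ⊆ H)) := by
      intro H hH
      simp only [Finset.mem_filter] at hH
      obtain ⟨hHp, S, hSH, hSne, hconn, hnull, hcard⟩ := hH
      refine Finset.mem_biUnion.mpr ⟨S, ?_, ?_⟩
      · refine Finset.mem_filter.mpr ⟨Finset.mem_powerset.mpr
          (hSH.trans (Finset.mem_powerset.mp hHp)), hSne, hcard, hnull⟩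
      · exact Finset.mem_filter.mpr ⟨hHp, hSH⟩
    refine le_trans (Finset.sum_le_sum_of_subset_of_nonneg hsub fun H _ _ => hw H) ?_
    refine le_trans (sum_biUnion_le' _ _ _ hw) ?_
    refine Finset.sum_le_sum fun S hS => ?_
    simp only [hbadS, Finset.mem_filter] at hS
    exact bern_sum_superset_le all S p hp0 hp1 (Finset.mem_powerset.mp hS.1)
  refine step1.trans ?_
  set C1 : ℕ := (r-1)*K * (((r-1)*K)^r)^K with hC1
  have step2 : ∀ s ∈ Finset.range (K+1),
      (∑ S ∈ badS.filter (fun S => S.card = s), p ^ S.card)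
        ≤ (C1 : ℝ) * (n:ℝ) ^ (-(1/2):ℝ) := by
    intro s hs
    have hsK : s ≤ K := by simpa using Nat.lt_succ_iff.mp (Finset.mem_range.mp hs)
    have hCpos : (0:ℝ) ≤ (C1 : ℝ) * (n:ℝ) ^ (-(1/2):ℝ) := by positivity
    rcases Nat.eq_zero_or_pos s with rfl | hs1
    · have hempty : badS.filter (fun S : Finset (FE n) => S.card = 0) = ∅ := by
        refine Finset.eq_empty_of_forall_notMem fun S hS => ?_
        simp only [hbadS, Finset.mem_filter] at hS
        exact absurd (Finset.card_eq_zero.mp hS.2) (Finset.nonempty_iff_ne_empty.mp hS.1.2.1)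
      rw [hempty, Finset.sum_empty]
      exact hCpos
    · have hfib : badS.filter (fun S => S.card = s) ⊆
          (all.powerset).filter
            (fun S => S.card = s ∧ (S.sup Prod.fst).card < (r-1) * s) := by
        intro S hS
        simp only [hbadS, Finset.mem_filter] at hS ⊢
        obtain ⟨⟨hSp, -, -, hnull⟩, hcard⟩ := hS
        exact ⟨hSp, hcard, by rw [← hcard]; exact hnull⟩
      have hcount : (badS.filter (fun S => S.card = s)).card
          ≤ (r-1)*s * n ^ ((r-1)*s - 1) * (((r-1)*s)^r) ^ s :=
        le_trans (Finset.card_le_card hfib) (badS_card_le F hn s (by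
          have : 3 ≤ r - 1 := by omega
          calc 1 ≤ 1 * 1 := by omega
            _ ≤ (r-1)*s := Nat.mul_le_mul (by omega) hs1))
      have hcnt2 : (r-1)*s * n ^ ((r-1)*s - 1) * (((r-1)*s)^r) ^ s
          ≤ ((r-1)*K * (((r-1)*K)^r)^K) * n ^ ((r-1)*s - 1) := by
        have ha : (r-1)*s ≤ (r-1)*K := Nat.mul_le_mul_left _ hsK
        have hb : (((r-1)*s)^r) ^ s ≤ (((r-1)*K)^r) ^ K := by
          calc (((r-1)*s)^r) ^ s ≤ (((r-1)*K)^r) ^ s :=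
                Nat.pow_le_pow_left (Nat.pow_le_pow_left ha r) s
            _ ≤ (((r-1)*K)^r) ^ K := Nat.pow_le_pow_right
                (Nat.one_le_pow _ _ (Nat.mul_pos (by omega) hK1)) hsK
        calc (r-1)*s * n ^ ((r-1)*s - 1) * (((r-1)*s)^r) ^ s
            ≤ (r-1)*K * n ^ ((r-1)*s - 1) * (((r-1)*K)^r) ^ K :=
              Nat.mul_le_mul (Nat.mul_le_mul ha le_rfl) hb
          _ = ((r-1)*K * (((r-1)*K)^r)^K) * n ^ ((r-1)*s - 1) := by ring
      have hsum2 : ∀ S ∈ badS.filter (fun S : Finset (FE n) => S.card = s),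
          p ^ S.card = p ^ s := fun S hS => by rw [(Finset.mem_filter.mp hS).2]
      have hsum : (∑ S ∈ badS.filter (fun S => S.card = s), p ^ S.card)
          = ((badS.filter (fun S => S.card = s)).card : ℝ) * p ^ s := by
        rw [Finset.sum_congr rfl hsum2, Finset.sum_const]
        simp [nsmul_eq_mul]
      rw [hsum]
      calc ((badS.filter (fun S => S.card = s)).card : ℝ) * p ^ s
          ≤ ((C1 * n ^ ((r-1)*s - 1) : ℕ) : ℝ) * p ^ s := by
            refine mul_le_mul_of_nonneg_right ?_ (pow_nonneg hp0 s)
            exact_mod_cast hcount.trans (by rw [hC1]; exact hcnt2)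
        _ = (C1 : ℝ) * ((n:ℝ) ^ ((r-1)*s - 1 : ℕ) * p ^ s) := by push_cast; ring
        _ ≤ (C1 : ℝ) * (n:ℝ) ^ (-(1/2):ℝ) := by
            refine mul_le_mul_of_nonneg_left ?_ (by positivity)
            exact avoid_term_le r n s K hr hn hs1 hsK hK1 p hp0 hple
  have hmaps : ∀ S ∈ badS, S.card ∈ Finset.range (K+1) := by
    intro S hS
    simp only [hbadS, Finset.mem_filter] at hS
    exact Finset.mem_range.mpr (Nat.lt_succ_of_le hS.2.2.1)
  calc ∑ S ∈ badS, p ^ S.card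
      = ∑ s ∈ Finset.range (K+1), ∑ S ∈ badS.filter (fun S => S.card = s), p ^ S.card :=
        (Finset.sum_fiberwise_of_maps_to hmaps _).symm
    _ ≤ ∑ s ∈ Finset.range (K+1), (C1 : ℝ) * (n:ℝ) ^ (-(1/2):ℝ) :=
        Finset.sum_le_sum step2
    _ = ((K+1 : ℕ) : ℝ) * ((C1 : ℝ) * (n:ℝ) ^ (-(1/2):ℝ)) := by
        rw [Finset.sum_const, Finset.card_range, nsmul_eq_mul]
    _ = (avoidConst r : ℝ) * (n:ℝ) ^ (-(1/2):ℝ) := by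
        rw [avoidConst, hC1, hKdef]; push_cast; ring

set_option maxHeartbeats 4000000 in
/-- For `π(n) ≤ n^{1-r+o(1)}`, whp the random `F`-graph `H_F(n,π)`
has no vertex of degree more than `d̄(π) + max(d̄(π), 3 log n)` and contains no avoidable
configuration. -/
theorem statement_3 (u r : ℕ) (hu : 2 ≤ u) (hr : 4 ≤ r)
    (F : Finset (Finset (Fin r))) (hFcard : ∀ e ∈ F, e.card = u) (hF : Nice u F)
    (π : ℕ → ℝ) (hπ01 : ∀ n, π n ∈ Set.Icc (0 : ℝ) 1)
    (hπle : ∀ ε : ℝ, 0 < ε → ∀ᶠ n : ℕ in atTop, π n ≤ (n : ℝ) ^ (1 - (r : ℝ) + ε))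
    (μ : (n : ℕ) → PMF (Finset (FE n)))
    (hμ : ∀ n, BernoulliVia (μ n) id (allFEdges F n) (π n)) :
    Tendsto (fun n => (μ n).toOuterMeasure
        {H | (∀ v : Fin n, (degFE H v : ℝ) ≤
                (r : ℝ) / n * (Mnum F n : ℝ) * π n +
                  max ((r : ℝ) / n * (Mnum F n : ℝ) * π n) (3 * Real.log n)) ∧
             ¬ HasAvoidable r H})
      atTop (nhds 1) := by
  have hp0 : ∀ m, 0 ≤ π m := fun m => (hπ01 m).1
  have hp1 : ∀ m, π m ≤ 1 := fun m => (hπ01 m).2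
  have hεpos : (0:ℝ) < 1/(2*((2^(r+1) : ℕ) : ℝ)) := by positivity
  have hDbound : ∀ᶠ m : ℕ in atTop, (μ m).toOuterMeasure
      {H : Finset (FE m) | ∃ v : Fin m, ¬ ((degFE H v : ℝ) ≤
          (r:ℝ)/m * (Mnum F m : ℝ) * π m
          + max ((r:ℝ)/m * (Mnum F m : ℝ) * π m) (3 * Real.log m))}
      ≤ ENNReal.ofReal ((m:ℝ) * Real.exp (-(6*Real.log 2 - 3) * Real.log m)) := by
    filter_upwards [eventually_ge_atTop 1] with m hm
    have hsetD : {H : Finset (FE m) | ∃ v : Fin m, ¬ ((degFE H v : ℝ) ≤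
          (r:ℝ)/m * (Mnum F m : ℝ) * π m
          + max ((r:ℝ)/m * (Mnum F m : ℝ) * π m) (3 * Real.log m))}
        = ⋃ v : Fin m, {H : Finset (FE m) | ¬ ((degFE H v : ℝ) ≤
          (r:ℝ)/m * (Mnum F m : ℝ) * π m
          + max ((r:ℝ)/m * (Mnum F m : ℝ) * π m) (3 * Real.log m))} := by
      ext H; simp only [Set.mem_setOf_eq, Set.mem_iUnion]
    calc (μ m).toOuterMeasure _ ≤ ∑' v : Fin m, (μ m).toOuterMeasure
          {H : Finset (FE m) | ¬ ((degFE H v : ℝ) ≤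
            (r:ℝ)/m * (Mnum F m : ℝ) * π m
            + max ((r:ℝ)/m * (Mnum F m : ℝ) * π m) (3 * Real.log m))} := by
          rw [hsetD]; exact measure_iUnion_le _
      _ = ∑ v : Fin m, (μ m).toOuterMeasure
          {H : Finset (FE m) | ¬ ((degFE H v : ℝ) ≤
            (r:ℝ)/m * (Mnum F m : ℝ) * π m
            + max ((r:ℝ)/m * (Mnum F m : ℝ) * π m) (3 * Real.log m))} := tsum_fintype _
      _ ≤ ∑ _v : Fin m, ENNReal.ofReal (Real.exp (-(6*Real.log 2 - 3) * Real.log m)) :=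
          Finset.sum_le_sum fun v _ =>
            deg_vertex_bound F (μ m) (π m) (hp0 m) (hp1 m) (hμ m) hm v
      _ = ENNReal.ofReal ((m:ℝ) * Real.exp (-(6*Real.log 2 - 3) * Real.log m)) := by
          rw [Finset.sum_const, Finset.card_univ, Fintype.card_fin, nsmul_eq_mul,
            ← ENNReal.ofReal_natCast m, ← ENNReal.ofReal_mul (Nat.cast_nonneg m)]
  have hAbound : ∀ᶠ m : ℕ in atTop, (μ m).toOuterMeasure
      {H : Finset (FE m) | HasAvoidable r H}
      ≤ ENNReal.ofReal ((avoidConst r : ℝ) * (m:ℝ) ^ (-(1/2):ℝ)) := by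
    filter_upwards [eventually_ge_atTop 1, hπle _ hεpos] with m hm hple
    exact avoid_bound F hr (μ m) (π m) (hp0 m) (hp1 m) (hμ m) hm hple
  have hPbad : Tendsto (fun m : ℕ => (μ m).toOuterMeasure
      {H : Finset (FE m) | ∃ v : Fin m, ¬ ((degFE H v : ℝ) ≤
          (r:ℝ)/m * (Mnum F m : ℝ) * π m
          + max ((r:ℝ)/m * (Mnum F m : ℝ) * π m) (3 * Real.log m))}
      + (μ m).toOuterMeasure {H : Finset (FE m) | HasAvoidable r H})
      atTop (nhds 0) := by
    have h1 : Tendsto (fun m : ℕ =>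
        ENNReal.ofReal ((m:ℝ) * Real.exp (-(6*Real.log 2 - 3) * Real.log m))
        + ENNReal.ofReal ((avoidConst r : ℝ) * (m:ℝ) ^ (-(1/2):ℝ)))
        atTop (nhds 0) := by
      have := (ENNReal.tendsto_ofReal tendsto_deg_bound).add
        (ENNReal.tendsto_ofReal (tendsto_avoid_bound (avoidConst r : ℝ)))
      simpa using this
    refine tendsto_of_tendsto_of_tendsto_of_le_of_le' tendsto_const_nhds h1
      (Eventually.of_forall fun m => zero_le) ?_
    filter_upwards [hDbound, hAbound] with m h2 h3
    exact add_le_add h2 h3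
  have huniv : ∀ m : ℕ, (μ m).toOuterMeasure (Set.univ : Set (Finset (FE m))) = 1 :=
    fun m => (PMF.toOuterMeasure_apply_eq_one_iff _ _).mpr (Set.subset_univ _)
  refine tendsto_of_tendsto_of_tendsto_of_le_of_le'
    (g := fun m : ℕ => 1 - ((μ m).toOuterMeasure
      {H : Finset (FE m) | ∃ v : Fin m, ¬ ((degFE H v : ℝ) ≤
          (r:ℝ)/m * (Mnum F m : ℝ) * π m
          + max ((r:ℝ)/m * (Mnum F m : ℝ) * π m) (3 * Real.log m))}
      + (μ m).toOuterMeasure {H : Finset (FE m) | HasAvoidable r H}))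
    (h := fun _ => 1) ?_ tendsto_const_nhds ?_ ?_
  · have := ENNReal.Tendsto.sub (tendsto_const_nhds (x := (1:ℝ≥0∞))) hPbad
      (Or.inl ENNReal.one_ne_top)
    simpa using this
  · refine Eventually.of_forall fun m => ?_
    rw [tsub_le_iff_right]
    calc (1:ℝ≥0∞) = (μ m).toOuterMeasure Set.univ := (huniv m).symm
      _ ≤ (μ m).toOuterMeasure
          ({H : Finset (FE m) | (∀ v : Fin m, (degFE H v : ℝ) ≤
              (r : ℝ) / m * (Mnum F m : ℝ) * π m +
                max ((r : ℝ) / m * (Mnum F m : ℝ) * π m) (3 * Real.log m)) ∧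
              ¬ HasAvoidable r H}
            ∪ ({H : Finset (FE m) | ∃ v : Fin m, ¬ ((degFE H v : ℝ) ≤
              (r:ℝ)/m * (Mnum F m : ℝ) * π m
              + max ((r:ℝ)/m * (Mnum F m : ℝ) * π m) (3 * Real.log m))}
              ∪ {H : Finset (FE m) | HasAvoidable r H})) := by
          refine measure_mono fun H _ => ?_
          by_cases h : (∀ v : Fin m, (degFE H v : ℝ) ≤
              (r : ℝ) / m * (Mnum F m : ℝ) * π m +
                max ((r : ℝ) / m * (Mnum F m : ℝ) * π m) (3 * Real.log m)) ∧
              ¬ HasAvoidable r H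
          · exact Or.inl h
          · right
            rw [not_and_or, not_not, not_forall] at h
            exact h.elim Or.inl Or.inr
      _ ≤ (μ m).toOuterMeasure {H : Finset (FE m) | (∀ v : Fin m, (degFE H v : ℝ) ≤
              (r : ℝ) / m * (Mnum F m : ℝ) * π m +
                max ((r : ℝ) / m * (Mnum F m : ℝ) * π m) (3 * Real.log m)) ∧
              ¬ HasAvoidable r H}
          + ((μ m).toOuterMeasure
            {H : Finset (FE m) | ∃ v : Fin m, ¬ ((degFE H v : ℝ) ≤
              (r:ℝ)/m * (Mnum F m : ℝ) * π m
              + max ((r:ℝ)/m * (Mnum F m : ℝ) * π m) (3 * Real.log m))}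
            + (μ m).toOuterMeasure {H : Finset (FE m) | HasAvoidable r H}) := by
          refine le_trans (measure_union_le _ _) ?_
          exact add_le_add_right (measure_union_le _ _) _
  · refine Eventually.of_forall fun m => ?_
    rw [← huniv m]
    exact measure_mono (Set.subset_univ _)
end
end

section
/- Let u ≥ 2 and let F be a strictly 1-balanced u-graph with r = v(F) ≥ 2 vertices and s = e(F) ≥ 1 hyperedges. Let S be a spanning subgraph of F, i.e., V(S) = V(F) and E(S) ⊆ E(F), and let z be the number of connected components of S (isolated vertices counting as components). If e(S) ≥ 1 and E(S) ≠ E(F), then (r−1)·e(S) ≤ s·(r−z) − 1; equivalently, (r−1)·|E(F) \ E(S)| ≥ (r−1)·(s − d_1(F)·(r−z)) + 1, where d_1(F) = s/(r−1). -/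
open Classical Filter Asymptotics MeasureTheory
open scoped ENNReal

noncomputable section

/-- The reachability relation between vertices of `Fin r` through edges of `E`. -/
def vertexRel {r : ℕ} (E : Finset (Finset (Fin r))) (a b : Fin r) : Prop :=
  Relation.ReflTransGen (fun x y => ∃ e ∈ E, x ∈ e ∧ y ∈ e) a b

/-- The number of connected components of the spanning subgraph of `Fin r` with edge set
`E` (isolated vertices counting as components). -/
def numComponentsV {r : ℕ} (E : Finset (Finset (Fin r))) : ℕ :=
  (Finset.univ.image (fun v : Fin r => Finset.univ.filter (fun w => vertexRel E v w))).card


lemma vertexRel_symm' {r : ℕ} (E : Finset (Finset (Fin r))) :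
    Symmetric (vertexRel E) :=
  by
    haveI : Std.Symm (fun x y : Fin r => ∃ e ∈ E, x ∈ e ∧ y ∈ e) :=
      ⟨fun _ _ ⟨e, he, ha, hb⟩ => ⟨e, he, hb, ha⟩⟩
    exact fun x y h => (inferInstance : Std.Symm (Relation.ReflTransGen
      (fun x y : Fin r => ∃ e ∈ E, x ∈ e ∧ y ∈ e))).symm x y h

/-- For a strictly 1-balanced `u`-graph `F` and a spanning subgraph
`S` with edge set `E(S) ⊆ E(F)`, `e(S) ≥ 1`, `E(S) ≠ E(F)` and `z` components
(isolated vertices included), `(r-1)·e(S) ≤ s·(r-z) - 1`. -/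
theorem statement_12 (u r : ℕ) (hu : 2 ≤ u) (hr : 2 ≤ r)
    (F : Finset (Finset (Fin r))) (hFcard : ∀ e ∈ F, e.card = u)
    (hs : 1 ≤ F.card) (hbal : StrictlyOneBalanced F)
    (ES : Finset (Finset (Fin r))) (hES : ES ⊆ F)
    (hESne : 1 ≤ ES.card) (hESneq : ES ≠ F) :
    (r - 1) * ES.card + 1 ≤ F.card * (r - numComponentsV ES) := by
  classical
  set comp : Fin r → Finset (Fin r) :=
    fun v => Finset.univ.filter (fun w => vertexRel ES v w) with hcompdef
  set comps := Finset.univ.image comp with hcompsdef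
  have hz : numComponentsV ES = comps.card := rfl
  have hsymm := vertexRel_symm' ES
  have hmem : ∀ v, v ∈ comp v := fun v => by
    simp only [hcompdef, Finset.mem_filter, Finset.mem_univ, true_and]
    exact Relation.ReflTransGen.refl
  have hceq : ∀ v w, w ∈ comp v → comp v = comp w := by
    intro v w hw
    simp only [hcompdef, Finset.mem_filter, Finset.mem_univ, true_and] at hw ⊢
    ext x
    simp only [Finset.mem_filter, Finset.mem_univ, true_and]
    exact ⟨fun h => (hsymm hw).trans h, fun h => hw.trans h⟩
  have hdisj : ∀ C ∈ comps, ∀ C' ∈ comps, C ≠ C' → Disjoint C C' := by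
    intro C hC C' hC' hne
    obtain ⟨v, -, rfl⟩ := Finset.mem_image.1 hC
    obtain ⟨w, -, rfl⟩ := Finset.mem_image.1 hC'
    rw [Finset.disjoint_left]
    intro x hx hx'
    exact hne ((hceq v x hx).trans (hceq w x hx').symm)
  have hbiUnion : comps.biUnion id = Finset.univ := by
    apply Finset.eq_univ_of_forall
    intro v
    exact Finset.mem_biUnion.2 ⟨comp v, Finset.mem_image_of_mem _ (Finset.mem_univ v), hmem v⟩
  have hsum_card : ∑ C ∈ comps, C.card = r := by
    have := Finset.card_biUnion hdisj (t := id)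
    rw [hbiUnion] at this
    simpa using this.symm
  -- each edge is contained in its component
  have hedge_sub : ∀ e ∈ ES, ∀ v ∈ e, e ⊆ comp v := by
    intro e he v hv w hw
    simp only [hcompdef, Finset.mem_filter, Finset.mem_univ, true_and]
    exact Relation.ReflTransGen.single ⟨e, he, hv, hw⟩
  have hedge_ne : ∀ e ∈ ES, e.Nonempty := by
    intro e he
    rw [← Finset.card_pos, hFcard e (hES he)]; omega
  -- edge count partition
  have hsum_edges : ∑ C ∈ comps, (ES.filter (fun e => e ⊆ C)).card = ES.card := by
    rw [← Finset.card_biUnion]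
    · congr 1
      apply Finset.Subset.antisymm
      · intro e he
        exact Finset.mem_of_mem_filter e (Finset.mem_biUnion.1 he).choose_spec.2
      · intro e he
        obtain ⟨v, hv⟩ := hedge_ne e he
        exact Finset.mem_biUnion.2 ⟨comp v,
          Finset.mem_image_of_mem _ (Finset.mem_univ v),
          Finset.mem_filter.2 ⟨he, hedge_sub e he v hv⟩⟩
    · intro C hC C' hC' hne
      rw [Function.onFun_apply, Finset.disjoint_left]
      intro e he he'
      obtain ⟨heES, heC⟩ := Finset.mem_filter.1 he
      obtain ⟨-, heC'⟩ := Finset.mem_filter.1 he'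
      obtain ⟨v, hv⟩ := hedge_ne e heES
      exact (Finset.disjoint_left.1 (hdisj C hC C' hC' hne)) (heC hv) (heC' hv)
  -- pick a component containing an edge
  obtain ⟨e₀, he₀⟩ : ES.Nonempty := Finset.card_pos.1 (by omega)
  obtain ⟨v₀, hv₀⟩ := hedge_ne e₀ he₀
  set C₀ := comp v₀ with hC₀
  have hC₀mem : C₀ ∈ comps := Finset.mem_image_of_mem _ (Finset.mem_univ v₀)
  have hC₀ne : (ES.filter (fun e => e ⊆ C₀)).Nonempty :=
    ⟨e₀, Finset.mem_filter.2 ⟨he₀, hedge_sub e₀ he₀ v₀ hv₀⟩⟩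
  -- per-component bound
  have hbound : ∀ C ∈ comps,
      (r - 1) * (ES.filter (fun e => e ⊆ C)).card + (if C = C₀ then 1 else 0)
        ≤ F.card * (C.card - 1) := by
    intro C hC
    by_cases hne : (ES.filter (fun e => e ⊆ C)).Nonempty
    · obtain ⟨e, he⟩ := hne
      obtain ⟨heES, heC⟩ := Finset.mem_filter.1 he
      have h1C : 1 < C.card := by
        have h2 : 2 ≤ e.card := by rw [hFcard e (hES heES)]; omega
        have := Finset.card_le_card heC
        omega
      have hnotall : ¬(C = Finset.univ ∧ ES.filter (fun e => e ⊆ C) = F) := by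
        rintro ⟨-, hEF⟩
        exact hESneq (Finset.Subset.antisymm hES (hEF ▸ Finset.filter_subset _ _))
      have := hbal C (ES.filter (fun e => e ⊆ C))
        ((Finset.filter_subset _ _).trans hES)
        (fun e he => (Finset.mem_filter.1 he).2) h1C hnotall
      rw [Nat.mul_comm] at this
      split <;> omega
    · rw [Finset.not_nonempty_iff_eq_empty] at hne
      rw [hne]
      have : C ≠ C₀ := by
        intro h
        rw [h] at hne
        exact Finset.not_nonempty_empty (hne ▸ hC₀ne)
      simp [this]
  -- sum up
  have hmain := Finset.sum_le_sum hbound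
  rw [Finset.sum_add_distrib, Finset.sum_ite_eq' comps C₀ (fun _ => 1),
    if_pos hC₀mem, ← Finset.mul_sum, hsum_edges, ← Finset.mul_sum] at hmain
  have hcardge : ∀ C ∈ comps, 1 ≤ C.card := by
    intro C hC
    obtain ⟨v, -, rfl⟩ := Finset.mem_image.1 hC
    exact Finset.card_pos.2 ⟨v, hmem v⟩
  have hsub : ∑ C ∈ comps, (C.card - 1) = r - comps.card := by
    have h1 : ∑ C ∈ comps, ((C.card - 1) + 1) = ∑ C ∈ comps, C.card :=
      Finset.sum_congr rfl (fun C hC => Nat.sub_add_cancel (hcardge C hC))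
    rw [Finset.sum_add_distrib, Finset.sum_const, smul_eq_mul, mul_one, hsum_card] at h1
    have hzr : comps.card ≤ r := by
      calc comps.card = ∑ C ∈ comps, 1 := by simp
        _ ≤ ∑ C ∈ comps, C.card := Finset.sum_le_sum hcardge
        _ = r := hsum_card
    omega
  rw [hsub] at hmain
  rw [hz]
  exact hmain
end
end

section
/- Let u ≥ 2, let G be a u-uniform hypergraph in which every vertex lies in at most Δ ≥ 1 hyperedges, let v be a vertex of G, and let r ≥ 1. Then the number of vertex sets W with v ∈ W and |W| ≤ r such that W is the vertex set of a connected subhypergraph of G containing v (i.e., W = {v}, or there is a nonempty set S of hyperedges of G whose union is W, with v ∈ W, such that the hypergraph with hyperedge set S is connected) is at most (r·(u−1)·Δ)^{r−1}. -/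
open Classical Filter Asymptotics MeasureTheory
open scoped ENNReal

noncomputable section

/-- Connectivity of a set of hyperedges: any two of its hyperedges are joined by a chain
of pairwise intersecting hyperedges. -/
def ConnSets {V : Type*} [DecidableEq V] (S : Finset (Finset V)) : Prop :=
  ∀ e ∈ S, ∀ f ∈ S,
    Relation.ReflTransGen (fun a b => a ∈ S ∧ b ∈ S ∧ (a ∩ b).Nonempty) e f


section Statement13Aux

variable {V : Type*} [DecidableEq V]

/-- One decoding step of the exploration process. -/
def stepL13 (G : Finset (Finset V)) (v : V) (L : List V) (p : ℕ × ℕ) : List V :=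
  if p.1 < L.length ∧ p.2 < (G.filter (fun e => L.getD p.1 v ∈ e)).card then
    L ++ ((G.filter (fun e => L.getD p.1 v ∈ e)).toList.getD p.2 ∅).toList.filter
      (fun x => x ∉ L)
  else L

/-- A list of edges each of which meets, and extends, the running union. -/
def chainOK13 (A : Finset V) : List (Finset V) → Prop
  | [] => True
  | e :: t => (e ∩ A).Nonempty ∧ ¬ e ⊆ A ∧ chainOK13 (A ∪ e) t

lemma cross13 {α : Type*} {R : α → α → Prop} {P : α → Prop} {a f : α}
    (h : Relation.ReflTransGen R a f) (ha : P a) :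
    ¬ P f → ∃ x y, R x y ∧ P x ∧ ¬ P y := by
  induction h with
  | refl => exact fun hf => absurd ha hf
  | @tail b c _ hbc ih =>
    intro hf
    by_cases hb : P b
    · exact ⟨b, c, hbc, hb, hf⟩
    · exact ih hb

lemma build13 {S : Finset (Finset V)} (hconn : ConnSets S) :
    ∀ (n : ℕ) (A : Finset V), (S.sup id \ A).card ≤ n →
      (∃ e₀ ∈ S, e₀ ⊆ A) →
      ∃ l : List (Finset V), (∀ e ∈ l, e ∈ S) ∧ chainOK13 A l ∧
        A ∪ l.foldr (· ∪ ·) ∅ = A ∪ S.sup id := by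
  intro n
  induction n with
  | zero =>
    intro A hcard _
    have hsub : S.sup id ⊆ A := by
      intro x hx
      by_contra hxA
      have hmem : x ∈ S.sup id \ A := Finset.mem_sdiff.mpr ⟨hx, hxA⟩
      have := Finset.card_pos.mpr ⟨x, hmem⟩
      omega
    exact ⟨[], by simp, trivial, by
      rw [List.foldr_nil, Finset.union_empty, Finset.union_eq_left.mpr hsub]⟩
  | succ n ih =>
    intro A hcard he₀
    obtain ⟨e₀, he₀S, he₀A⟩ := he₀
    by_cases hsub : S.sup id ⊆ A
    · exact ⟨[], by simp, trivial, by
        rw [List.foldr_nil, Finset.union_empty, Finset.union_eq_left.mpr hsub]⟩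
    · obtain ⟨x, hxsup, hxA⟩ := Finset.not_subset.mp hsub
      obtain ⟨fx, hfxS, hxfx⟩ := Finset.mem_sup.mp hxsup
      have hPfx : ¬ fx ⊆ A := fun hss => hxA (hss hxfx)
      obtain ⟨x', y, ⟨hx'S, hyS, hxy⟩, hx'A, hyA⟩ := cross13 (P := fun s => s ⊆ A) (hconn e₀ he₀S fx hfxS) he₀A hPfx
      obtain ⟨w, hw⟩ := hxy
      rw [Finset.mem_inter] at hw
      have hwA : w ∈ A := hx'A hw.1
      have hsubY : y ⊆ S.sup id := fun z hz => Finset.mem_sup.mpr ⟨y, hyS, hz⟩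
      obtain ⟨z, hzy, hzA⟩ := Finset.not_subset.mp hyA
      have hlt : (S.sup id \ (A ∪ y)).card < (S.sup id \ A).card := by
        apply Finset.card_lt_card
        rw [Finset.ssubset_iff_of_subset
          (Finset.sdiff_subset_sdiff (le_refl _) Finset.subset_union_left)]
        exact ⟨z, Finset.mem_sdiff.mpr ⟨hsubY hzy, hzA⟩,
          fun hc => (Finset.mem_sdiff.mp hc).2 (Finset.mem_union_right _ hzy)⟩
      obtain ⟨l, hlS, hlchain, hlU⟩ := ih (A ∪ y) (by omega)
        ⟨e₀, he₀S, he₀A.trans Finset.subset_union_left⟩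
      refine ⟨y :: l, ?_, ⟨⟨w, Finset.mem_inter.mpr ⟨hw.2, hwA⟩⟩, hyA, hlchain⟩, ?_⟩
      · intro e he
        rcases List.mem_cons.mp he with h | h
        · exact h ▸ hyS
        · exact hlS e h
      · rw [List.foldr_cons, ← Finset.union_assoc, hlU, Finset.union_assoc,
          Finset.union_eq_right.mpr hsubY]

lemma stepL13_eq (G : Finset (Finset V)) (v : V) {L : List V} {w : V} {e : Finset V}
    (hw : w ∈ L) (he : e ∈ G) (hwe : w ∈ e) :
    stepL13 G v L (L.idxOf w, (G.filter (fun e' => w ∈ e')).toList.idxOf e)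
      = L ++ e.toList.filter (fun x => x ∉ L) := by
  have ha : L.idxOf w < L.length := List.idxOf_lt_length_iff.mpr hw
  have hget : L.getD (L.idxOf w) v = w := by
    rw [List.getD_eq_getElem _ _ ha]
    exact List.getElem_idxOf ha
  have hmem : e ∈ (G.filter (fun e' => w ∈ e')).toList :=
    Finset.mem_toList.mpr (Finset.mem_filter.mpr ⟨he, hwe⟩)
  have hb : (G.filter (fun e' => w ∈ e')).toList.idxOf e
      < (G.filter (fun e' => w ∈ e')).toList.length := List.idxOf_lt_length_iff.mpr hmem
  have hb' : (G.filter (fun e' => w ∈ e')).toList.idxOf e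
      < (G.filter (fun e' => w ∈ e')).card := by
    rwa [Finset.length_toList] at hb
  have hgete : (G.filter (fun e' => w ∈ e')).toList.getD
      ((G.filter (fun e' => w ∈ e')).toList.idxOf e) ∅ = e := by
    rw [List.getD_eq_getElem _ _ hb]
    exact List.getElem_idxOf hb
  rw [stepL13]
  simp only [hget]
  rw [if_pos ⟨ha, hb'⟩, hgete]

lemma foldl_const13 {α β : Type*} {f : β → α → β} {b : β} {p : α} (h : f b p = b) :
    ∀ m, (List.replicate m p).foldl f b = b
  | 0 => rfl
  | m + 1 => by rw [List.replicate_succ, List.foldl_cons, h]; exact foldl_const13 h m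

lemma encode13 {G : Finset (Finset V)} {Δ : ℕ} (v : V)
    (hdeg : ∀ w : V, (G.filter (fun e => w ∈ e)).card ≤ Δ) :
    ∀ (l : List (Finset V)) (L : List V), L.Nodup →
      (∀ e ∈ l, e ∈ G) → chainOK13 L.toFinset l →
      ∃ ins : List (ℕ × ℕ),
        ins.length = l.length ∧
        (ins.foldl (stepL13 G v) L).Nodup ∧
        (ins.foldl (stepL13 G v) L).toFinset = L.toFinset ∪ l.foldr (· ∪ ·) ∅ ∧
        L.length + l.length ≤ (ins.foldl (stepL13 G v) L).length ∧
        ∀ p ∈ ins, p.1 < (ins.foldl (stepL13 G v) L).length ∧ p.2 < Δ := by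
  intro l
  induction l with
  | nil =>
    intro L hnd _ _
    exact ⟨[], rfl, hnd, by simp, by simp, by simp⟩
  | cons e t ih =>
    intro L hnd hmem hchain
    obtain ⟨⟨w, hw⟩, hnots, hchain'⟩ := hchain
    rw [Finset.mem_inter] at hw
    have hwL : w ∈ L := List.mem_toFinset.mp hw.2
    have heG : e ∈ G := hmem e (by simp)
    have hstep : stepL13 G v L (L.idxOf w, (G.filter (fun e' => w ∈ e')).toList.idxOf e)
        = L ++ e.toList.filter (fun x => x ∉ L) := stepL13_eq G v hwL heG hw.1
    set L₁ := L ++ e.toList.filter (fun x => x ∉ L) with hL₁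
    have hnd₁ : L₁.Nodup := by
      refine hnd.append ((Finset.nodup_toList e).filter _) ?_
      intro a haL hafil
      simp only [List.mem_filter, decide_eq_true_eq] at hafil
      exact hafil.2 haL
    have hfin₁ : L₁.toFinset = L.toFinset ∪ e := by
      ext x
      simp only [hL₁, List.toFinset_append, Finset.mem_union, List.mem_toFinset,
        List.mem_filter, Finset.mem_toList, decide_eq_true_eq]
      constructor
      · rintro (h | ⟨h, _⟩)
        · exact Or.inl h
        · exact Or.inr h
      · intro h
        rcases h with h | h
        · exact Or.inl h
        · by_cases hxL : x ∈ L
          · exact Or.inl hxL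
          · exact Or.inr ⟨h, hxL⟩
    have hlen₁ : L.length < L₁.length := by
      obtain ⟨x, hxe, hxL⟩ := Finset.not_subset.mp hnots
      have hxfil : x ∈ e.toList.filter (fun x => x ∉ L) := by
        simp only [List.mem_filter, Finset.mem_toList, decide_eq_true_eq]
        exact ⟨hxe, fun hc => hxL (List.mem_toFinset.mpr hc)⟩
      have := List.length_pos_iff.mpr (List.ne_nil_of_mem hxfil)
      simp only [hL₁, List.length_append]
      omega
    obtain ⟨ins', hl, hnd', hfin', hlen', hbound⟩ :=
      ih L₁ hnd₁ (fun e' he' => hmem e' (List.mem_cons_of_mem _ he')) (by rwa [hfin₁])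
    refine ⟨(L.idxOf w, (G.filter (fun e' => w ∈ e')).toList.idxOf e) :: ins',
      by simp [hl], ?_, ?_, ?_, ?_⟩
    · rw [List.foldl_cons, hstep]; exact hnd'
    · rw [List.foldl_cons, hstep, hfin', hfin₁, List.foldr_cons, Finset.union_assoc]
    · rw [List.foldl_cons, hstep]
      simp only [List.length_cons]
      omega
    · intro p hp
      rw [List.foldl_cons, hstep]
      rcases List.mem_cons.mp hp with h | h
      · subst h
        constructor
        · have h1 : L.idxOf w < L.length := List.idxOf_lt_length_iff.mpr hwL
          omega
        · have h2 : (G.filter (fun e' => w ∈ e')).toList.idxOf e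
              < (G.filter (fun e' => w ∈ e')).toList.length :=
            List.idxOf_lt_length_iff.mpr
              (Finset.mem_toList.mpr (Finset.mem_filter.mpr ⟨heG, hw.1⟩))
          rw [Finset.length_toList] at h2
          exact lt_of_lt_of_le h2 (hdeg w)
      · exact hbound p h

end Statement13Aux

/-- In a `u`-uniform hypergraph with maximum degree at most `Δ ≥ 1`,
the number of vertex sets `W ∋ v` with `|W| ≤ r` that are vertex sets of connected
subhypergraphs containing `v` is at most `(r(u-1)Δ)^{r-1}`. -/
theorem statement_13 (u : ℕ) (hu : 2 ≤ u) (V : Type*) [Fintype V] [DecidableEq V]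
    (G : Finset (Finset V)) (hG : ∀ e ∈ G, e.card = u)
    (Δ : ℕ) (hΔ : 1 ≤ Δ) (hdeg : ∀ w : V, (G.filter (fun e => w ∈ e)).card ≤ Δ)
    (v : V) (r : ℕ) (hr : 1 ≤ r) :
    ((Finset.univ : Finset (Finset V)).filter
        (fun W => v ∈ W ∧ W.card ≤ r ∧
          (W = {v} ∨ ∃ S ⊆ G, S.Nonempty ∧ S.sup id = W ∧ ConnSets S))).card
      ≤ (r * (u - 1) * Δ) ^ (r - 1) := by
  classical
  set D : (Fin (r - 1) → ℕ × ℕ) → Finset V :=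
    fun g => ((List.ofFn g).foldl (stepL13 G v) [v]).toFinset with hD
  set s : Finset (Fin (r - 1) → ℕ × ℕ) :=
    Fintype.piFinset (fun _ => Finset.range r ×ˢ Finset.range Δ) with hs
  have hsurj : Set.SurjOn D ↑s ↑((Finset.univ : Finset (Finset V)).filter
      (fun W => v ∈ W ∧ W.card ≤ r ∧
        (W = {v} ∨ ∃ S ⊆ G, S.Nonempty ∧ S.sup id = W ∧ ConnSets S))) := by
    intro W hW
    simp only [Finset.coe_filter, Set.mem_setOf_eq, Finset.mem_univ, true_and] at hW
    obtain ⟨hvW, hcard, hcase⟩ := hW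
    have key : ∃ ins : List (ℕ × ℕ), ins.length = r - 1 ∧
        (∀ p ∈ ins, p.1 < r ∧ p.2 < Δ) ∧
        (ins.foldl (stepL13 G v) [v]).toFinset = W := by
      rcases hcase with hsingle | ⟨S, hSG, hSne, hsup, hconn⟩
      · -- W = {v}
        rcases Nat.lt_or_ge r 2 with hr2 | hr2
        · exact ⟨[], by simp only [List.length_nil]; omega, by simp, by simp [hsingle]⟩
        · refine ⟨List.replicate (r - 1) (1, 0), List.length_replicate, ?_, ?_⟩
          · intro p hp
            rw [List.eq_of_mem_replicate hp]
            exact ⟨by omega, by omega⟩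
          · have hnoop : stepL13 G v [v] (1, 0) = [v] := by
              rw [stepL13, if_neg]
              simp
            rw [foldl_const13 hnoop]
            simp [hsingle]
      · -- W is the vertex set of a connected subhypergraph
        have hvsup : v ∈ S.sup id := hsup ▸ hvW
        obtain ⟨f₁, hf₁S, hvf₁⟩ := Finset.mem_sup.mp hvsup
        have hvf₁ : v ∈ f₁ := hvf₁
        have hf₁G : f₁ ∈ G := hSG hf₁S
        have hf₁W : f₁ ⊆ W := by
          intro x hx
          exact hsup ▸ Finset.mem_sup.mpr ⟨f₁, hf₁S, hx⟩
        obtain ⟨l, hlS, hlchain, hlU⟩ := build13 hconn (S.sup id \ f₁).card f₁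
          (le_refl _) ⟨f₁, hf₁S, le_refl _⟩
        have hU : f₁ ∪ l.foldr (· ∪ ·) ∅ = W := by
          rw [hlU, hsup, Finset.union_eq_right.mpr hf₁W]
        -- first step
        set bv := (G.filter (fun e' => v ∈ e')).toList.idxOf f₁ with hbv
        have hbvΔ : bv < Δ := by
          have h2 : bv < (G.filter (fun e' => v ∈ e')).toList.length :=
            List.idxOf_lt_length_iff.mpr
              (Finset.mem_toList.mpr (Finset.mem_filter.mpr ⟨hf₁G, hvf₁⟩))
          rw [Finset.length_toList] at h2
          exact lt_of_lt_of_le h2 (hdeg v)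
        have hstep1 : stepL13 G v [v] (0, bv)
            = [v] ++ f₁.toList.filter (fun x => x ∉ [v]) := by
          have := stepL13_eq G v (L := [v]) (List.mem_singleton.mpr rfl) hf₁G hvf₁
          rwa [List.idxOf_cons_self] at this
        set L₁ := [v] ++ f₁.toList.filter (fun x => x ∉ [v]) with hL₁
        have hndL₁ : L₁.Nodup := by
          refine (List.nodup_singleton v).append ((Finset.nodup_toList f₁).filter _) ?_
          intro a haL hafil
          simp only [List.mem_filter, decide_eq_true_eq] at hafil
          exact hafil.2 haL
        have hfinL₁ : L₁.toFinset = f₁ := by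
          ext x
          simp only [hL₁, List.toFinset_append, Finset.mem_union, List.mem_toFinset,
            List.mem_filter, Finset.mem_toList, decide_eq_true_eq, List.toFinset_cons,
            List.toFinset_nil, insert_empty_eq, Finset.mem_singleton, List.mem_singleton]
          constructor
          · rintro (h | ⟨h, _⟩)
            · exact h ▸ hvf₁
            · exact h
          · intro h
            by_cases hxv : x = v
            · exact Or.inl hxv
            · exact Or.inr ⟨h, hxv⟩
        obtain ⟨ins', hlen', hnd', hfin', hlenge, hbound⟩ :=
          encode13 v hdeg l L₁ hndL₁ (fun e' he' => hSG (hlS e' he')) (by rwa [hfinL₁])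
        set L' := ins'.foldl (stepL13 G v) L₁ with hL'
        have hfinW : L'.toFinset = W := by rw [hfin', hfinL₁, hU]
        have hL'len : L'.length = W.card := by
          rw [← hfinW, List.toFinset_card_of_nodup hnd']
        have hL₁len : L₁.length = u := by
          have h1 : L₁.toFinset.card = L₁.length := List.toFinset_card_of_nodup hndL₁
          rw [hfinL₁, hG f₁ hf₁G] at h1
          omega
        have hLr : L'.length ≤ r := by omega
        have hkr : 1 + l.length ≤ r - 1 := by omega
        have hvL' : v ∈ L' := by
          rw [← List.mem_toFinset, hfinW]; exact hvW
        have hstep0 : stepL13 G v L' (L'.idxOf v, bv) = L' := by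
          have h2 := stepL13_eq G v (L := L') hvL' hf₁G hvf₁
          have hfil : f₁.toList.filter (fun x => x ∉ L') = [] := by
            rw [List.filter_eq_nil_iff]
            intro a ha
            simp only [decide_eq_true_eq, not_not]
            have haW : a ∈ W := hf₁W (Finset.mem_toList.mp ha)
            rw [← hfinW] at haW
            exact List.mem_toFinset.mp haW
          rw [hfil, List.append_nil] at h2
          exact h2
        refine ⟨(0, bv) :: (ins' ++ List.replicate (r - 1 - (1 + l.length)) (L'.idxOf v, bv)),
          ?_, ?_, ?_⟩
        · simp only [List.length_cons, List.length_append, List.length_replicate, hlen']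
          omega
        · intro p hp
          rcases List.mem_cons.mp hp with h | h
          · subst h
            exact ⟨by omega, hbvΔ⟩
          rcases List.mem_append.mp h with h | h
          · obtain ⟨h1, h2⟩ := hbound p h
            exact ⟨lt_of_lt_of_le h1 hLr, h2⟩
          · rw [List.eq_of_mem_replicate h]
            refine ⟨lt_of_lt_of_le (List.idxOf_lt_length_iff.mpr hvL') hLr, hbvΔ⟩
        · rw [List.foldl_cons, hstep1, List.foldl_append, ← hL',
            foldl_const13 hstep0, hfinW]
    obtain ⟨ins, hlen, hbd, hfold⟩ := key
    refine ⟨fun i => ins.getD i (0, 0), ?_, ?_⟩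
    · simp only [hs, Finset.mem_coe, Fintype.mem_piFinset, Finset.mem_product,
        Finset.mem_range]
      intro i
      have hi : (i : ℕ) < ins.length := by rw [hlen]; exact i.2
      rw [List.getD_eq_getElem _ _ hi]
      exact hbd _ (List.getElem_mem hi)
    · have hofn : List.ofFn (fun i : Fin (r - 1) => ins.getD i (0, 0)) = ins := by
        apply List.ext_getElem (by simp [hlen])
        intro i h1 h2
        simp only [List.getElem_ofFn]
        exact List.getD_eq_getElem _ _ h2
      simp only [hD, hofn, hfold]
  have hcard := Finset.card_le_card_of_surjOn D hsurj
  have hscard : s.card = (r * Δ) ^ (r - 1) := by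
    rw [hs, Fintype.card_piFinset_const, Finset.card_product, Finset.card_range,
      Finset.card_range]
  have hmono : (r * Δ) ^ (r - 1) ≤ (r * (u - 1) * Δ) ^ (r - 1) := by
    apply Nat.pow_le_pow_left
    have h1 : 1 ≤ u - 1 := by omega
    calc r * Δ = r * 1 * Δ := by ring
      _ ≤ r * (u - 1) * Δ := Nat.mul_le_mul_right Δ (Nat.mul_le_mul_left r h1)
  omega
end
end
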